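/- arXiv:2510.14263 — 4 statements merged into one kernel-verified Lean document; each statement's English description precedes it below -/
import Mathlib

section
/- For 0<q<1 and any polynomial f, the sup-norm of Ī(f) over the set S = {0} ∪ {q^{2n} : n ∈ ℕ} is at most the sup-norm of f over S: ‖Ī(f)‖_∞ ≤ ‖f‖_∞. -/
open Polynomial

/-- The set S = {0} ∪ {q^{2n} : n ∈ ℕ}. -/
def S (q : ℝ) : Set ℝ := {0} ∪ {x | ∃ n : ℕ, x = q ^ (2 * n)}

/-- The operator Ī on ℂ[x], determined by Ī(xᵏ) = ((1-q²)/(1-q^{2k+2})) x^{k+1}. -/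
noncomputable def Ibar (q : ℝ) (f : Polynomial ℂ) : Polynomial ℂ :=
  f.sum fun n a => C (a * ((1 - (q : ℂ) ^ 2) / (1 - (q : ℂ) ^ (2 * n + 2)))) * X ^ (n + 1)

lemma Ibar_eval {q : ℝ} (hq0 : 0 < q) (hq1 : q < 1) (f : Polynomial ℂ) (z : ℂ) :
    (Ibar q f).eval z
      = (1 - (q:ℂ)^2) * z * ∑' m : ℕ, (q:ℂ)^(2*m) * f.eval ((q:ℂ)^(2*m) * z) := by
  calc (Ibar q f).eval z
      = ∑ k ∈ f.support,
          f.coeff k * ((1 - (q:ℂ)^2) / (1 - (q:ℂ)^(2*k+2))) * z^(k+1) := by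
        rw [Ibar, Polynomial.sum_def, Polynomial.eval_finset_sum]
        refine Finset.sum_congr rfl fun k _ => ?_
        simp [mul_assoc]
    _ = ∑ k ∈ f.support,
          (1 - (q:ℂ)^2) * z * (f.coeff k * z^k * ∑' m : ℕ, ((q:ℂ)^(2*k+2))^m) := by
        refine Finset.sum_congr rfl fun k _ => ?_
        have hgeo : (∑' m : ℕ, ((q:ℂ) ^ (2*k+2)) ^ m) = (1 - (q:ℂ)^(2*k+2))⁻¹ := by
          apply tsum_geometric_of_norm_lt_one
          rw [norm_pow, Complex.norm_real, Real.norm_eq_abs, abs_of_pos hq0]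
          exact pow_lt_one₀ hq0.le hq1 (by omega)
        rw [hgeo]
        have hne' : (1:ℂ) - (q:ℂ)^(2*k+2) ≠ 0 := by
          intro h0
          rw [sub_eq_zero] at h0
          have hlt : ‖(q:ℂ)^(2*k+2)‖ < 1 := by
            rw [norm_pow, Complex.norm_real, Real.norm_eq_abs, abs_of_pos hq0]
            exact pow_lt_one₀ hq0.le hq1 (by omega)
          rw [← h0, norm_one] at hlt
          exact lt_irrefl _ hlt
        field_simp
        ring
    _ = ∑ k ∈ f.support,
          ∑' m : ℕ, (1 - (q:ℂ)^2) * z * ((q:ℂ)^(2*m) * (f.coeff k * ((q:ℂ)^(2*m)*z)^k)) := by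
        refine Finset.sum_congr rfl fun k _ => ?_
        rw [← tsum_mul_left, ← tsum_mul_left]
        refine tsum_congr fun m => ?_
        have h3 : ((q:ℂ)^(2*k+2))^m = (q:ℂ)^(2*m) * ((q:ℂ)^(2*m))^k := by
          rw [← pow_mul, ← pow_mul, ← pow_add]; congr 1; ring
        rw [h3, mul_pow]
        ring
    _ = ∑' m : ℕ, ∑ k ∈ f.support,
          (1 - (q:ℂ)^2) * z * ((q:ℂ)^(2*m) * (f.coeff k * ((q:ℂ)^(2*m)*z)^k)) := by
        refine Eq.symm (Summable.tsum_finsetSum fun k _ => ?_)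
        have h4 : (fun m : ℕ => (1 - (q:ℂ)^2) * z * ((q:ℂ)^(2*m) * (f.coeff k * ((q:ℂ)^(2*m)*z)^k)))
            = fun m : ℕ => ((1 - (q:ℂ)^2) * z * (f.coeff k * z^k)) * ((q:ℂ)^(2*k+2))^m := by
          funext m
          have h3 : ((q:ℂ)^(2*k+2))^m = (q:ℂ)^(2*m) * ((q:ℂ)^(2*m))^k := by
            rw [← pow_mul, ← pow_mul, ← pow_add]; congr 1; ring
          rw [h3, mul_pow]
          ring
        rw [h4]
        apply Summable.mul_left
        apply summable_geometric_of_norm_lt_one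
        rw [norm_pow, Complex.norm_real, Real.norm_eq_abs, abs_of_pos hq0]
        exact pow_lt_one₀ hq0.le hq1 (by omega)
    _ = (1 - (q:ℂ)^2) * z * ∑' m : ℕ, (q:ℂ)^(2*m) * f.eval ((q:ℂ)^(2*m) * z) := by
        rw [← tsum_mul_left]
        refine tsum_congr fun m => ?_
        rw [eval_eq_sum, Polynomial.sum_def, Finset.mul_sum, Finset.mul_sum]

/-- ‖Ī(f)‖_∞ ≤ ‖f‖_∞ on S. -/
theorem stmt3 (q : ℝ) (hq0 : 0 < q) (hq1 : q < 1) (f : Polynomial ℂ) :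
    (⨆ x : S q, ‖(Ibar q f).eval ((x : ℝ) : ℂ)‖) ≤ ⨆ x : S q, ‖f.eval ((x : ℝ) : ℂ)‖ := by
  have h0S : (0:ℝ) ∈ S q := Or.inl rfl
  haveI : Nonempty (S q) := ⟨⟨0, h0S⟩⟩
  -- members of S are in [0,1]
  have hmem : ∀ x ∈ S q, 0 ≤ x ∧ x ≤ 1 := by
    rintro x (rfl | ⟨n, rfl⟩)
    · exact ⟨le_refl 0, zero_le_one⟩
    · exact ⟨pow_nonneg hq0.le _, pow_le_one₀ hq0.le hq1.le⟩
  -- bound on ‖f.eval x‖ on S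
  have hb : BddAbove (Set.range fun x : S q => ‖f.eval ((x : ℝ) : ℂ)‖) := by
    refine ⟨∑ k ∈ f.support, ‖f.coeff k‖, ?_⟩
    rintro r ⟨x, rfl⟩
    dsimp only
    rw [eval_eq_sum, Polynomial.sum_def]
    refine (norm_sum_le _ _).trans (Finset.sum_le_sum fun k _ => ?_)
    rw [norm_mul]
    have hx := hmem x.1 x.2
    have : ‖((x:ℝ):ℂ) ^ k‖ ≤ 1 := by
      rw [norm_pow, Complex.norm_real, Real.norm_eq_abs, abs_of_nonneg hx.1]
      exact pow_le_one₀ hx.1 hx.2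
    calc ‖f.coeff k‖ * ‖((x:ℝ):ℂ) ^ k‖ ≤ ‖f.coeff k‖ * 1 :=
          mul_le_mul_of_nonneg_left this (norm_nonneg _)
      _ = ‖f.coeff k‖ := mul_one _
  set M := ⨆ x : S q, ‖f.eval ((x : ℝ) : ℂ)‖ with hM
  have hMle : ∀ x ∈ S q, ‖f.eval ((x:ℝ):ℂ)‖ ≤ M := fun x hx =>
    le_ciSup hb (⟨x, hx⟩ : S q)
  have hM0 : 0 ≤ M := le_trans (norm_nonneg _) (hMle 0 h0S)
  apply ciSup_le
  rintro ⟨x, hx⟩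
  simp only
  rw [Ibar_eval hq0 hq1 f ((x:ℝ):ℂ)]
  have hx01 := hmem x hx
  -- each q^{2m} x ∈ S
  have hmemS : ∀ m : ℕ, q ^ (2*m) * x ∈ S q := by
    intro m
    rcases hx with rfl | ⟨n, rfl⟩
    · simpa using h0S
    · exact Or.inr ⟨m + n, by rw [← pow_add]; ring_nf⟩
  -- norm of each term
  have hterm : ∀ m : ℕ, ‖(q:ℂ)^(2*m) * f.eval ((q:ℂ)^(2*m) * ((x:ℝ):ℂ))‖
      ≤ (q^2)^m * M := by
    intro m
    rw [norm_mul]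
    have h1 : ‖(q:ℂ)^(2*m)‖ = (q^2)^m := by
      rw [norm_pow, Complex.norm_real, Real.norm_eq_abs, abs_of_pos hq0, ← pow_mul, mul_comm]
    have h2 : ((q:ℂ)^(2*m) * ((x:ℝ):ℂ)) = (((q^(2*m) * x : ℝ)):ℂ) := by
      push_cast; ring
    rw [h1, h2]
    exact mul_le_mul_of_nonneg_left (hMle _ (hmemS m)) (by positivity)
  have hgs : HasSum (fun m : ℕ => (q^2)^m * M) ((1 - q^2)⁻¹ * M) := by
    exact (hasSum_geometric_of_lt_one (by positivity)
      (by nlinarith)).mul_right M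
  have hts : ‖∑' m : ℕ, (q:ℂ)^(2*m) * f.eval ((q:ℂ)^(2*m) * ((x:ℝ):ℂ))‖
      ≤ (1 - q^2)⁻¹ * M := tsum_of_norm_bounded hgs hterm
  have hq2 : (0:ℝ) < 1 - q^2 := by nlinarith
  calc ‖(1 - (q:ℂ)^2) * ((x:ℝ):ℂ) * ∑' m : ℕ, (q:ℂ)^(2*m) * f.eval ((q:ℂ)^(2*m) * ((x:ℝ):ℂ))‖
      = (1 - q^2) * x * ‖∑' m : ℕ, (q:ℂ)^(2*m) * f.eval ((q:ℂ)^(2*m) * ((x:ℝ):ℂ))‖ := by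
        rw [norm_mul, norm_mul]
        congr 1
        congr 1
        · rw [show (1 - (q:ℂ)^2) = ((1 - q^2 : ℝ) : ℂ) by push_cast; ring,
            Complex.norm_real, Real.norm_eq_abs, abs_of_pos hq2]
        · rw [Complex.norm_real, Real.norm_eq_abs, abs_of_nonneg hx01.1]
    _ ≤ (1 - q^2) * x * ((1 - q^2)⁻¹ * M) := by
        exact mul_le_mul_of_nonneg_left hts (mul_nonneg hq2.le hx01.1)
    _ = x * M := by field_simp
    _ ≤ 1 * M := mul_le_mul_of_nonneg_right hx01.2 hM0
    _ = M := one_mul M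
end

section
/- For 0<q<1, the extension of Ī to continuous functions on S = {0} ∪ {q^{2n} : n ∈ ℕ}, given by Ī(f)(x) = (1-q²)·x·∑_{n=0}^∞ q^{2n} f(q^{2n}x), is injective: if Ī(f) = 0 on S then f = 0 on S. -/
/-- The extension of Ī to functions: Ī(f)(x) = (1-q²)·x·∑_{n=0}^∞ q^{2n} f(q^{2n}x). -/
noncomputable def IbarC (q : ℝ) (f : ℝ → ℂ) (x : ℝ) : ℂ :=
  (1 - (q : ℂ) ^ 2) * (x : ℂ) * ∑' n : ℕ, (q : ℂ) ^ (2 * n) * f (q ^ (2 * n) * x)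

/-- Ī is injective on continuous functions on S. -/
theorem stmt4 (q : ℝ) (hq0 : 0 < q) (hq1 : q < 1) (f : ℝ → ℂ)
    (hf : ContinuousOn f (S q)) (h0 : ∀ x ∈ S q, IbarC q f x = 0) :
    ∀ x ∈ S q, f x = 0 := by
  have hq2 : (0:ℝ) ≤ q ^ 2 := by positivity
  have hq2' : q ^ 2 < 1 := by nlinarith
  -- S is compact
  have htend : Filter.Tendsto (fun n : ℕ => q ^ (2 * n)) Filter.atTop (nhds 0) := by
    simpa [pow_mul] using tendsto_pow_atTop_nhds_zero_of_lt_one hq2 hq2'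
  have hScompact : IsCompact (S q) := by
    have := htend.isCompact_insert_range
    convert this using 1
    ext x
    simp [S, Set.range, eq_comm]
  -- bound on f
  obtain ⟨C, hC⟩ := hScompact.exists_bound_of_continuousOn hf
  have hC0 : 0 ≤ C := le_trans (norm_nonneg _) (hC _ (Or.inl rfl))
  -- membership of powers in S
  have hmem : ∀ n : ℕ, q ^ (2 * n) ∈ S q := fun n => Or.inr ⟨n, rfl⟩
  -- key sequence
  set g : ℕ → ℂ := fun n => (q : ℂ) ^ (2 * n) * f (q ^ (2 * n)) with hg
  have hsummable : Summable g := by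
    apply Summable.of_norm_bounded (g := fun n => (q ^ 2) ^ n * C)
    · exact (summable_geometric_of_lt_one hq2 hq2').mul_right C
    · intro n
      have h1 : ‖(q : ℂ) ^ (2 * n)‖ = (q ^ 2) ^ n := by
        rw [← pow_mul]
        simp [norm_pow, abs_of_nonneg hq0.le]
      rw [hg, norm_mul, h1]
      exact mul_le_mul_of_nonneg_left (hC _ (hmem n)) (by positivity)
  -- shifted summable
  have hshift : ∀ m : ℕ, Summable fun n => g (n + m) := fun m =>
    (summable_nat_add_iff m).2 hsummable
  -- shifted sums vanish
  have hsum0 : ∀ m : ℕ, (∑' n : ℕ, g (n + m)) = 0 := by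
    intro m
    have h := h0 _ (hmem m)
    rw [IbarC] at h
    have hne1 : (1 - (q : ℂ) ^ 2) ≠ 0 := by
      intro hcon
      have : ((q:ℂ))^2 = 1 := by linear_combination -hcon
      have : (q:ℝ)^2 = 1 := by exact_mod_cast this
      nlinarith
    have hne2 : ((q ^ (2 * m) : ℝ) : ℂ) ≠ 0 := by
      exact_mod_cast (pow_ne_zero _ hq0.ne')
    have h3 : (∑' n : ℕ, (q : ℂ) ^ (2 * n) * f (q ^ (2 * n) * q ^ (2 * m))) = 0 := by
      rcases mul_eq_zero.1 h with h' | h'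
      · rcases mul_eq_zero.1 h' with h'' | h''
        · exact absurd h'' hne1
        · exact absurd h'' hne2
      · exact h'
    have h4 : ∀ n : ℕ, (q : ℂ) ^ (2 * m) * ((q : ℂ) ^ (2 * n) * f (q ^ (2 * n) * q ^ (2 * m)))
        = g (n + m) := by
      intro n
      have harg : (q : ℝ) ^ (2 * n) * q ^ (2 * m) = q ^ (2 * (n + m)) := by ring
      rw [hg]; simp only [harg]; push_cast; ring
    calc (∑' n : ℕ, g (n + m))
        = ∑' n : ℕ, (q : ℂ) ^ (2 * m) * ((q : ℂ) ^ (2 * n) * f (q ^ (2 * n) * q ^ (2 * m))) := by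
          exact tsum_congr fun n => (h4 n).symm
      _ = (q : ℂ) ^ (2 * m) * ∑' n : ℕ, (q : ℂ) ^ (2 * n) * f (q ^ (2 * n) * q ^ (2 * m)) :=
          tsum_mul_left
      _ = 0 := by rw [h3, mul_zero]
  -- each g m = 0
  have hgzero : ∀ m : ℕ, g m = 0 := by
    intro m
    have h := Summable.tsum_eq_zero_add (hshift m)
    simp only [zero_add] at h
    rw [hsum0 m] at h
    have h2 : (∑' n : ℕ, g (n + 1 + m)) = 0 := by
      have := hsum0 (m + 1)
      rw [← this]
      exact tsum_congr fun n => by ring_nf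
    rw [show (fun b : ℕ => g (b + 1 + m)) = (fun b : ℕ => g (b + 1 + m)) from rfl] at h
    have : (0 : ℂ) = g m + ∑' n : ℕ, g (n + 1 + m) := h
    rw [h2, add_zero] at this
    exact this.symm
  have hfpow : ∀ m : ℕ, f (q ^ (2 * m)) = 0 := by
    intro m
    have h := hgzero m
    rw [hg] at h
    have hne : ((q : ℂ)) ^ (2 * m) ≠ 0 := pow_ne_zero _ (by exact_mod_cast hq0.ne')
    exact (mul_eq_zero.1 h).resolve_left hne
  -- f 0 = 0 by continuity
  have hf0 : f 0 = 0 := by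
    have hcont : ContinuousWithinAt f (S q) 0 := hf 0 (Or.inl rfl)
    have htend2 : Filter.Tendsto (fun n : ℕ => f (q ^ (2 * n))) Filter.atTop (nhds (f 0)) := by
      apply hcont.tendsto.comp
      exact tendsto_nhdsWithin_iff.2 ⟨htend, Filter.Eventually.of_forall hmem⟩
    have : Filter.Tendsto (fun _ : ℕ => (0 : ℂ)) Filter.atTop (nhds (f 0)) := by
      simpa [hfpow] using htend2
    exact tendsto_nhds_unique this tendsto_const_nhds
  rintro x (rfl | ⟨n, rfl⟩)
  · exact hf0
  · exact hfpow n
end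

section
/- Let 0<q<1 and let B₋, B₀, B₊ be the operators on ℓ² with B₋eₙ = qⁿ√(1-q^{2n})e_{n-1}, B₀eₙ = q^{2n}eₙ, B₊eₙ = q^{n+1}√(1-q^{2n+2})e_{n+1}. Let n₁ < n₂ < ... < n_k be distinct nonnegative integers and f₁,...,f_k continuous functions of B₀ (i.e. f_i(B₀) via functional calculus) with f_i(1) ≠ 0 for each i. Then the operators f₁(B₀)B₋^{n₁}, ..., f_k(B₀)B₋^{n_k} are linearly independent over ℂ. -/
/-- ℓ², the Hilbert space of square-summable complex sequences. -/
noncomputable abbrev H : Type := lp (fun _ : ℕ => ℂ) 2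

/-- The standard orthonormal basis vectors eₙ of ℓ². -/
noncomputable def e (n : ℕ) : H := lp.single 2 n (1 : ℂ)

section Aux

variable (q : ℝ) (hq0 : 0 < q) (hq1 : q < 1) (Bm : H →L[ℂ] H)
  (hBm0 : Bm (e 0) = 0)
  (hBm : ∀ m : ℕ, Bm (e (m + 1)) =
      ((q ^ (m + 1) * Real.sqrt (1 - q ^ (2 * (m + 1))) : ℝ) : ℂ) • e m)

include hBm0 hBm in
lemma pow_e_eq_zero : ∀ p m : ℕ, m < p → (Bm ^ p) (e m) = 0 := by
  intro p
  induction p with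
  | zero => omega
  | succ p ih =>
    intro m hm
    rw [pow_succ, ContinuousLinearMap.mul_apply]
    cases m with
    | zero => rw [hBm0, map_zero]
    | succ m => rw [hBm m, map_smul, ih m (by omega), smul_zero]

include hq0 hq1 hBm in
lemma pow_e_shift : ∀ p m : ℕ, ∃ c : ℂ, c ≠ 0 ∧ (Bm ^ p) (e (m + p)) = c • e m := by
  intro p
  induction p with
  | zero => intro m; exact ⟨1, one_ne_zero, by simp⟩
  | succ p ih =>
    intro m
    obtain ⟨c, hc0, hc⟩ := ih m
    set d : ℝ := q ^ (m + p + 1) * Real.sqrt (1 - q ^ (2 * (m + p + 1))) with hd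
    have hd0 : d ≠ 0 := by
      have h1 : (0:ℝ) < q ^ (m + p + 1) := pow_pos hq0 _
      have h2 : q ^ (2 * (m + p + 1)) < 1 :=
        pow_lt_one₀ hq0.le hq1 (by omega)
      have h3 : (0:ℝ) < Real.sqrt (1 - q ^ (2 * (m + p + 1))) :=
        Real.sqrt_pos.mpr (by linarith)
      positivity
    refine ⟨(d : ℂ) * c, mul_ne_zero (by exact_mod_cast hd0) hc0, ?_⟩
    have : m + (p + 1) = (m + p) + 1 := by omega
    rw [this, pow_succ, ContinuousLinearMap.mul_apply, hBm (m + p), map_smul, hc,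
      smul_smul]

end Aux

/-- for distinct nonnegative integers n₁ < ... < n_k and continuous
functions f₁,...,f_k of B₀ (via functional calculus, i.e. diagonal operators
fᵢ(B₀)eₘ = fᵢ(q^{2m})eₘ) with fᵢ(1) ≠ 0, the operators fᵢ(B₀)B₋^{nᵢ} are
linearly independent over ℂ. -/
theorem stmt17 (q : ℝ) (hq0 : 0 < q) (hq1 : q < 1)
    (Bm : H →L[ℂ] H)
    (hBm0 : Bm (e 0) = 0)
    (hBm : ∀ m : ℕ, Bm (e (m + 1)) =
      ((q ^ (m + 1) * Real.sqrt (1 - q ^ (2 * (m + 1))) : ℝ) : ℂ) • e m)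
    (k : ℕ) (n : Fin k → ℕ) (hn : StrictMono n)
    (f : Fin k → (ℝ → ℂ)) (hf1 : ∀ i, f i 1 ≠ 0)
    (F : Fin k → (H →L[ℂ] H))
    (hF : ∀ i (m : ℕ), F i (e m) = f i (q ^ (2 * m)) • e m) :
    LinearIndependent ℂ (fun i : Fin k => F i * Bm ^ (n i)) := by
  rw [Fintype.linearIndependent_iff]
  intro g hg i₀
  have h0 : (∑ i, g i • (F i * Bm ^ (n i))) (e (n i₀)) = 0 := by rw [hg]; rfl
  simp only [ContinuousLinearMap.sum_apply, ContinuousLinearMap.smul_apply,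
    ContinuousLinearMap.mul_apply] at h0
  have h1 : (inner ℂ (e 0) (∑ i, g i • F i ((Bm ^ (n i)) (e (n i₀)))) : ℂ) = 0 := by
    rw [h0, inner_zero_right]
  rw [inner_sum] at h1
  have key : ∀ i ∈ Finset.univ, i ≠ i₀ →
      (inner ℂ (e 0) (g i • F i ((Bm ^ (n i)) (e (n i₀)))) : ℂ) = 0 := by
    intro i _ hi
    rcases lt_trichotomy i i₀ with h | h | h
    · have hlt : n i < n i₀ := hn h
      obtain ⟨c, hc0, hc⟩ := pow_e_shift q hq0 hq1 Bm hBm (n i) (n i₀ - n i)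
      rw [show n i₀ - n i + n i = n i₀ by omega] at hc
      rw [hc, map_smul, hF, inner_smul_right, inner_smul_right, inner_smul_right]
      have : (inner ℂ (e 0) (e (n i₀ - n i)) : ℂ) = 0 := by
        unfold e
        rw [lp.inner_single_left, lp.single_apply]
        simp [show ¬(0 = n i₀ - n i) by omega]
      rw [this, mul_zero, mul_zero, mul_zero]
    · exact absurd h hi
    · have hlt : n i₀ < n i := hn h
      rw [pow_e_eq_zero q Bm hBm0 hBm (n i) (n i₀) hlt, map_zero, smul_zero,
        inner_zero_right]
  rw [Finset.sum_eq_single_of_mem i₀ (Finset.mem_univ i₀) key] at h1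
  obtain ⟨c, hc0, hc⟩ := pow_e_shift q hq0 hq1 Bm hBm (n i₀) 0
  rw [zero_add] at hc
  rw [hc, map_smul, hF, inner_smul_right, inner_smul_right, inner_smul_right] at h1
  have he : (inner ℂ (e 0) (e 0) : ℂ) = 1 := by
    unfold e
    rw [lp.inner_single_left, lp.single_apply]
    simp
  rw [he, mul_one] at h1
  have hfne : f i₀ (q ^ (2 * 0)) ≠ 0 := by
    simpa using hf1 i₀
  rcases mul_eq_zero.mp h1 with h | h
  · exact h
  · rcases mul_eq_zero.mp h with h | h
    · exact absurd h hc0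
    · exact absurd h hfne
end

section
/- Let 0<q<1 and let B₋, B₀ be the operators on ℓ² with B₋eₙ = qⁿ√(1-q^{2n})e_{n-1} and B₀eₙ = q^{2n}eₙ. Then for every continuous function f on sp(B₀) = {0} ∪ {q^{2n}} and every n ∈ ℕ, the commutation relation B₋ⁿ f(B₀) = (m_{q^{2n}}f)(B₀) B₋ⁿ holds, where (m_{q^{2n}}f)(x) = f(q^{2n}x). -/
/-- Two continuous linear maps on ℓ² agreeing on the basis vectors are equal. -/
theorem ext_of_basis {T S : H →L[ℂ] H} (h : ∀ m, T (e m) = S (e m)) : T = S := by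
  refine ContinuousLinearMap.ext fun x => ?_
  have hs : HasSum (fun i : ℕ => lp.single 2 i (x i : ℂ)) x :=
    lp.hasSum_single (by norm_num) x
  have key : ∀ i : ℕ, lp.single 2 i (x i : ℂ) = (x i : ℂ) • e i := by
    intro i
    rw [e, ← lp.single_smul]
    norm_num
  have hT : HasSum (fun i : ℕ => T (lp.single 2 i (x i : ℂ))) (T x) := hs.mapL T
  have hS : HasSum (fun i : ℕ => S (lp.single 2 i (x i : ℂ))) (S x) := hs.mapL S
  refine hT.unique ?_
  convert hS using 2 with i
  rw [key i, map_smul, map_smul, h i]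

/-- for every continuous function f on sp(B₀) = {0} ∪ {q^{2m}}
(realized via functional calculus as the diagonal operator f(B₀)eₘ = f(q^{2m})eₘ)
and every n, we have B₋ⁿ f(B₀) = (m_{q^{2n}}f)(B₀) B₋ⁿ, where (m_{q^{2n}}f)(x) = f(q^{2n}x). -/
theorem stmt18 (q : ℝ) (hq0 : 0 < q) (hq1 : q < 1)
    (Bm : H →L[ℂ] H)
    (hBm0 : Bm (e 0) = 0)
    (hBm : ∀ m : ℕ, Bm (e (m + 1)) =
      ((q ^ (m + 1) * Real.sqrt (1 - q ^ (2 * (m + 1))) : ℝ) : ℂ) • e m)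
    (f : ℝ → ℂ) (n : ℕ)
    (F Fm : H →L[ℂ] H)
    (hF : ∀ m : ℕ, F (e m) = f (q ^ (2 * m)) • e m)
    (hFm : ∀ m : ℕ, Fm (e m) = f (q ^ (2 * n) * q ^ (2 * m)) • e m) :
    Bm ^ n * F = Fm * Bm ^ n := by
  -- Bm^k lowers index by k
  have hA : ∀ k : ℕ, ∀ m : ℕ, k ≤ m → ∃ c : ℂ, (Bm ^ k) (e m) = c • e (m - k) := by
    intro k
    induction k with
    | zero => intro m _; exact ⟨1, by simp⟩
    | succ k ih =>
      intro m hm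
      obtain ⟨m', rfl⟩ : ∃ m', m = m' + 1 := ⟨m - 1, by omega⟩
      have hk : k ≤ m' := by omega
      obtain ⟨c, hc⟩ := ih m' hk
      refine ⟨((q ^ (m' + 1) * Real.sqrt (1 - q ^ (2 * (m' + 1))) : ℝ) : ℂ) * c, ?_⟩
      have : (Bm ^ (k + 1)) (e (m' + 1)) = (Bm ^ k) (Bm (e (m' + 1))) := by
        rw [pow_succ]; rfl
      rw [this, hBm m', map_smul, hc, smul_smul, Nat.succ_sub_succ]
  have hB : ∀ k : ℕ, ∀ m : ℕ, m < k → (Bm ^ k) (e m) = 0 := by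
    intro k
    induction k with
    | zero => omega
    | succ k ih =>
      intro m hm
      have hstep : (Bm ^ (k + 1)) (e m) = (Bm ^ k) (Bm (e m)) := by
        rw [pow_succ]; rfl
      match m with
      | 0 => rw [hstep, hBm0, map_zero]
      | m' + 1 =>
        rw [hstep, hBm m', map_smul, ih m' (by omega), smul_zero]
  apply ext_of_basis
  intro m
  simp only [ContinuousLinearMap.mul_apply]
  rw [hF m, map_smul]
  by_cases hnm : n ≤ m
  · obtain ⟨c, hc⟩ := hA n m hnm
    have harg : q ^ (2 * n) * q ^ (2 * (m - n)) = q ^ (2 * m) := by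
      rw [← pow_add]; congr 1; omega
    rw [hc, map_smul, hFm (m - n), harg, smul_smul, smul_smul, mul_comm]
  · rw [hB n m (by omega), map_zero, smul_zero]
end
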